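/- arXiv:1603.04412 — 5 statements merged into one kernel-verified Lean document; each statement's English description precedes it below -/
import Mathlib

section
/- If no connected component of the complement of G₁ is isomorphic to a connected component of the complement of G₂, then Aut(G₁ + G₂) is isomorphic to Aut(G₁) × Aut(G₂). -/
/-!
Complementation does not change the automorphism group, and the complement of `G₁ + G₂` is the
disjoint union `G₁ᶜ ⊕ G₂ᶜ`. An automorphism of a disjoint union maps every connected component
isomorphically onto a connected component; when no component of `G₁ᶜ` is isomorphic to one of
`G₂ᶜ`, it therefore maps each side onto itself and splits as a pair of automorphisms.
-/

/-- The disjoint union of two graphs. -/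
def sumGraph {α β : Type*} (G : SimpleGraph α) (H : SimpleGraph β) :
    SimpleGraph (α ⊕ β) where
  Adj a b :=
    match a, b with
    | Sum.inl u, Sum.inl v => G.Adj u v
    | Sum.inr u, Sum.inr v => H.Adj u v
    | _, _ => False
  symm := ⟨by rintro (u | u) (v | v) h <;> simp_all [SimpleGraph.adj_comm]⟩
  loopless := ⟨by rintro (u | u) h <;> simp_all⟩

/-- The join of two graphs on disjoint vertex sets: all edges of both graphs
together with all edges between the two vertex sets. -/
def joinGraph {α β : Type*} (G : SimpleGraph α) (H : SimpleGraph β) :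
    SimpleGraph (α ⊕ β) where
  Adj a b :=
    match a, b with
    | Sum.inl u, Sum.inl v => G.Adj u v
    | Sum.inr u, Sum.inr v => H.Adj u v
    | _, _ => True
  symm := ⟨by rintro (u | u) (v | v) h <;> simp_all [SimpleGraph.adj_comm]⟩
  loopless := ⟨by rintro (u | u) h <;> simp_all⟩

namespace SimpleGraph

variable {V W V' W' : Type*} {G : SimpleGraph V} {H : SimpleGraph W}
  {G' : SimpleGraph V'} {H' : SimpleGraph W'}

lemma Reachable.eq_of_forall_adj {α : Type*} {f : V → α} (hf : ∀ u v, G.Adj u v → f u = f v)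
    {u v : V} (h : G.Reachable u v) : f u = f v := by
  rw [reachable_iff_reflTransGen] at h
  induction h with
  | refl => rfl
  | tail _ hadj ih => exact ih.trans (hf _ _ hadj)

lemma reachable_sum_iff {a b : V ⊕ W} :
    (G ⊕g H).Reachable a b ↔
      Sum.map G.connectedComponentMk H.connectedComponentMk a =
        Sum.map G.connectedComponentMk H.connectedComponentMk b := by
  refine ⟨fun h => h.eq_of_forall_adj ?_, fun h => ?_⟩
  · rintro (u | u) (v | v) huv <;> simp_all [ConnectedComponent.eq, Adj.reachable]
  · rcases a with u | u <;> rcases b with v | v <;> simp only [Sum.map_inl, Sum.map_inr,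
      Sum.inl.injEq, Sum.inr.injEq, reduceCtorEq, ConnectedComponent.eq] at h
    · exact h.map Embedding.sumInl.toHom
    · exact h.map Embedding.sumInr.toHom

lemma bijOn_inl_supp_connectedComponentMk (v : V) :
    Set.BijOn Sum.inl (G.connectedComponentMk v).supp
      ((G ⊕g H).connectedComponentMk (.inl v)).supp := by
  refine ⟨fun u hu => ?_, Sum.inl_injective.injOn, ?_⟩
  · simp_all [ConnectedComponent.eq, reachable_sum_iff]
  · rintro (u | u) hu <;> simp_all [ConnectedComponent.eq, reachable_sum_iff]

lemma bijOn_inr_supp_connectedComponentMk (w : W) :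
    Set.BijOn Sum.inr (H.connectedComponentMk w).supp
      ((G ⊕g H).connectedComponentMk (.inr w)).supp := by
  refine ⟨fun u hu => ?_, Sum.inr_injective.injOn, ?_⟩
  · simp_all [ConnectedComponent.eq, reachable_sum_iff]
  · rintro (u | u) hu <;> simp_all [ConnectedComponent.eq, reachable_sum_iff]

lemma Iso.bijOn_supp_connectedComponentMk (f : G ≃g G') (v : V) :
    Set.BijOn f (G.connectedComponentMk v).supp (G'.connectedComponentMk (f v)).supp := by
  refine ⟨fun u hu => ?_, f.injective.injOn, fun u hu => ⟨f.symm u, ?_, f.apply_symm_apply u⟩⟩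
  · simp_all [ConnectedComponent.eq, Iso.reachable_iff]
  · simp_all [ConnectedComponent.eq, Iso.symm_apply_reachable]

noncomputable def Embedding.induceOfBijOn (φ : G ↪g G') {s : Set V} {t : Set V'}
    (h : Set.BijOn φ s t) : G.induce s ≃g G'.induce t where
  toEquiv := h.equiv φ
  map_rel_iff' := by simp [Set.BijOn.equiv]

lemma Iso.nonempty_iso_induce_supp_of_apply_inl_eq_inr (f : G ⊕g H ≃g G' ⊕g H') {v : V}
    {w : W'} (hf : f (.inl v) = .inr w) :
    Nonempty (G.induce (G.connectedComponentMk v).supp ≃g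
      H'.induce (H'.connectedComponentMk w).supp) := by
  have hbij := f.bijOn_supp_connectedComponentMk (.inl v)
  rw [hf] at hbij
  exact ⟨(Embedding.sumInl.induceOfBijOn (bijOn_inl_supp_connectedComponentMk v)).trans <|
    (f.toEmbedding.induceOfBijOn hbij).trans <|
      (Embedding.sumInr.induceOfBijOn (bijOn_inr_supp_connectedComponentMk w)).symm⟩

lemma Iso.isRight_apply_inr (f : G ⊕g H ≃g G' ⊕g H') (hf : ∀ v, (f.symm (.inl v)).isLeft)
    (w : W) : (f (.inr w)).isRight := by
  rcases hfw : f (.inr w) with v | w'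
  · simpa [← hfw] using hf v
  · rfl

def Iso.sumLeft (f : G ⊕g H ≃g G' ⊕g H') (hf : ∀ v, (f (.inl v)).isLeft)
    (hf' : ∀ v, (f.symm (.inl v)).isLeft) : G ≃g G' where
  toFun v := (f (.inl v)).getLeft (hf v)
  invFun v := (f.symm (.inl v)).getLeft (hf' v)
  left_inv v := Sum.inl_injective (β := W) (by simp)
  right_inv v := Sum.inl_injective (β := W') (by simp)
  map_rel_iff' {a b} := by
    simp only [Equiv.coe_fn_mk]
    rw [← sum_adj_inl (H := H'), Sum.inl_getLeft, Sum.inl_getLeft, f.map_adj_iff, sum_adj_inl]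

@[simp]
lemma Iso.inl_sumLeft_apply (f : G ⊕g H ≃g G' ⊕g H') (hf : ∀ v, (f (.inl v)).isLeft)
    (hf' : ∀ v, (f.symm (.inl v)).isLeft) (v : V) : Sum.inl (f.sumLeft hf hf' v) = f (.inl v) :=
  Sum.inl_getLeft _ _

def Iso.sumRight (f : G ⊕g H ≃g G' ⊕g H') (hf : ∀ w, (f (.inr w)).isRight)
    (hf' : ∀ w, (f.symm (.inr w)).isRight) : H ≃g H' where
  toFun w := (f (.inr w)).getRight (hf w)
  invFun w := (f.symm (.inr w)).getRight (hf' w)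
  left_inv w := Sum.inr_injective (α := V) (by simp)
  right_inv w := Sum.inr_injective (α := V') (by simp)
  map_rel_iff' {a b} := by
    simp only [Equiv.coe_fn_mk]
    rw [← sum_adj_inr (G := G'), Sum.inr_getRight, Sum.inr_getRight, f.map_adj_iff, sum_adj_inr]

@[simp]
lemma Iso.inr_sumRight_apply (f : G ⊕g H ≃g G' ⊕g H') (hf : ∀ w, (f (.inr w)).isRight)
    (hf' : ∀ w, (f.symm (.inr w)).isRight) (w : W) : Sum.inr (f.sumRight hf hf' w) = f (.inr w) :=
  Sum.inr_getRight _ _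

def Iso.compl (f : G ≃g G') : Gᶜ ≃g G'ᶜ :=
  ⟨f.toEquiv, by simp [f.map_adj_iff]⟩

def autEquivCompl (G : SimpleGraph V) : (G ≃g G) ≃* (Gᶜ ≃g Gᶜ) where
  toFun := Iso.compl
  invFun f := ⟨f.toEquiv, fun {a b} => by
    have : Gᶜᶜ.Adj (f a) (f b) ↔ Gᶜᶜ.Adj a b := f.compl.map_adj_iff
    rwa [compl_compl] at this⟩
  map_mul' _ _ := rfl

variable (G H) in
def sumCongrHom : (G ≃g G) × (H ≃g H) →* (G ⊕g H ≃g G ⊕g H) where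
  toFun p := Iso.sumCongr p.1 p.2
  map_one' := by ext (v | w) <;> rfl
  map_mul' _ _ := by ext (v | w) <;> rfl

lemma sumCongrHom_injective : Function.Injective (sumCongrHom G H) := by
  rintro ⟨f₁, f₂⟩ ⟨g₁, g₂⟩ h
  simp only [Prod.mk.injEq]
  constructor
  · ext v; exact Sum.inl_injective (DFunLike.congr_fun h (.inl v))
  · ext w; exact Sum.inr_injective (DFunLike.congr_fun h (.inr w))

lemma sumCongrHom_surjective (h : ∀ (f : G ⊕g H ≃g G ⊕g H) v, (f (.inl v)).isLeft) :
    Function.Surjective (sumCongrHom G H) := by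
  have h' f := Iso.isRight_apply_inr f (h f.symm)
  refine fun f => ⟨(f.sumLeft (h f) (h f.symm), f.sumRight (h' f) (h' f.symm)), ?_⟩
  ext (v | w) <;> simp [sumCongrHom]

noncomputable def autSumEquivProd (h : ∀ (c : G.ConnectedComponent) (d : H.ConnectedComponent),
      ¬ Nonempty (G.induce c.supp ≃g H.induce d.supp)) :
    (G ⊕g H ≃g G ⊕g H) ≃* (G ≃g G) × (H ≃g H) := by
  refine (MulEquiv.ofBijective (sumCongrHom G H) ⟨sumCongrHom_injective, ?_⟩).symm
  refine sumCongrHom_surjective fun f v => ?_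
  rcases hfv : f (.inl v) with u | w
  · rfl
  · exact (h _ _ (f.nonempty_iso_induce_supp_of_apply_inl_eq_inr hfv)).elim

end SimpleGraph

open SimpleGraph

lemma compl_joinGraph {α β : Type*} (G₁ : SimpleGraph α) (G₂ : SimpleGraph β) :
    (joinGraph G₁ G₂)ᶜ = G₁ᶜ ⊕g G₂ᶜ := by
  ext (u | u) (v | v) <;> simp [joinGraph]

/-- If no connected component of `G₁ᶜ` is isomorphic to a connected component of
`G₂ᶜ`, then `Aut(G₁ + G₂) ≅ Aut(G₁) × Aut(G₂)`. -/
theorem stmt_4 {α β : Type*} (G₁ : SimpleGraph α) (G₂ : SimpleGraph β)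
    (h : ∀ (c : (G₁ᶜ).ConnectedComponent) (d : (G₂ᶜ).ConnectedComponent),
      ¬ Nonempty ((G₁ᶜ).induce c.supp ≃g (G₂ᶜ).induce d.supp)) :
    Nonempty ((joinGraph G₁ G₂ ≃g joinGraph G₁ G₂) ≃* (G₁ ≃g G₁) × (G₂ ≃g G₂)) := by
  have e := autEquivCompl (joinGraph G₁ G₂)
  rw [compl_joinGraph] at e
  exact ⟨e.trans <| (autSumEquivProd h).trans <|
    (autEquivCompl G₁).symm.prodCongr (autEquivCompl G₂).symm⟩
end

section
/- If a graph G on p vertices (p prime) satisfies that p does not divide |[G]| = p!/|Aut(G)|, then G is a regular graph. -/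
/-- If `G` is a graph on `p` vertices (`p` prime) and `p` does not divide
`|[G]| = p!/|Aut(G)|`, then `G` is regular. -/
theorem stmt_7 (p : ℕ) (hp : p.Prime) (G : SimpleGraph (Fin p))
    [DecidableRel G.Adj]
    (h : ¬ p ∣ p.factorial / Nat.card (G ≃g G)) :
    ∃ r, G.IsRegularOfDegree r := by
  classical
  -- the forgetful monoid hom to permutations
  let φ : (G ≃g G) →* Equiv.Perm (Fin p) :=
    { toFun := fun e => e.toEquiv
      map_one' := rfl
      map_mul' := fun _ _ => rfl }
  have hφinj : Function.Injective φ := fun a b hab => by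
    apply RelIso.ext
    intro x
    exact congrFun (congrArg (fun (e : Equiv.Perm (Fin p)) => (e : Fin p → Fin p)) hab) x
  have hfin : Finite (G ≃g G) := Finite.of_injective φ hφinj
  have hcard : Nat.card (G ≃g G) ∣ p.factorial := by
    have := Subgroup.card_dvd_of_injective φ hφinj
    rwa [Nat.card_eq_fintype_card (α := Equiv.Perm (Fin p)), Fintype.card_perm, Fintype.card_fin] at this
  -- p divides |Aut G|
  have hpdvd : p ∣ Nat.card (G ≃g G) := by
    obtain ⟨k, hk⟩ := hcard
    have hpfac : p ∣ p.factorial := Nat.dvd_factorial hp.pos le_rfl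
    have hN : Nat.card (G ≃g G) ≠ 0 := Nat.card_ne_zero.2 ⟨⟨RelIso.refl _⟩, hfin⟩
    have hdiv : p.factorial / Nat.card (G ≃g G) = k := by
      rw [hk]; exact Nat.mul_div_cancel_left k (Nat.pos_of_ne_zero hN)
    rw [hk] at hpfac
    rcases (Nat.Prime.dvd_mul hp).1 hpfac with h1 | h2
    · exact h1
    · exact absurd (hdiv ▸ h2) h
  -- Cauchy: an automorphism of order p
  have : Fintype (G ≃g G) := Fintype.ofFinite _
  rw [Nat.card_eq_fintype_card] at hpdvd
  haveI := Fact.mk hp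
  obtain ⟨f, hf⟩ := exists_prime_orderOf_dvd_card p hpdvd
  -- its image is a permutation of order p, hence a p-cycle
  set σ : Equiv.Perm (Fin p) := φ f with hσ
  have hσord : orderOf σ = p := by
    rw [hσ, orderOf_injective φ hφinj, hf]
  have hσcyc : σ.IsCycle := by
    apply Equiv.Perm.isCycle_of_prime_order' (hσord.symm ▸ hp)
    rw [hσord, Fintype.card_fin]
    have := hp.pos
    omega
  -- the cycle has full support, so the automorphism group acts transitively
  have hsupp : σ.support = Finset.univ := by
    apply Finset.eq_univ_of_card
    rw [← hσcyc.orderOf, hσord, Fintype.card_fin]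
  obtain ⟨x, -, hx⟩ := hσcyc
  -- every automorphism preserves degrees
  have hdeg : ∀ (e : G ≃g G) (v : Fin p), G.degree (e v) = G.degree v := by
    intro e v
    rw [← SimpleGraph.card_neighborSet_eq_degree, ← SimpleGraph.card_neighborSet_eq_degree]
    exact (Fintype.card_congr (e.mapNeighborSet v)).symm
  refine ⟨G.degree x, fun y => ?_⟩
  have hy : σ y ≠ y := by
    have : y ∈ σ.support := by rw [hsupp]; exact Finset.mem_univ y
    exact Equiv.Perm.mem_support.1 this
  obtain ⟨i, hi⟩ := hx hy
  have hpow : (σ ^ i) x = ((f ^ i : G ≃g G) : Fin p → Fin p) x := by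
    rw [hσ, ← map_zpow φ f i]
    rfl
  rw [hpow] at hi
  rw [← hi, hdeg]
end

section
/- A non-evasive simplicial complex is collapsible; in particular, its Euler characteristic equals 1. -/
variable {α : Type*} [DecidableEq α]

/-- A (finite abstract) simplicial complex, given by its finite set of nonempty
faces: every nonempty subset of a face is a face. -/
def IsComplex (K : Finset (Finset α)) : Prop :=
  (∀ A ∈ K, A.Nonempty) ∧ ∀ A ∈ K, ∀ B ⊆ A, B.Nonempty → B ∈ K

/-- The link of a vertex `v`: the (nonempty) faces `A` with `v ∉ A` and
`A ∪ {v}` a face. -/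
def linkCx (K : Finset (Finset α)) (v : α) : Finset (Finset α) :=
  K.filter (fun A => v ∉ A ∧ insert v A ∈ K)

/-- The deletion of a vertex `v`: the faces not containing `v`. -/
def delCx (K : Finset (Finset α)) (v : α) : Finset (Finset α) :=
  K.filter (fun A => v ∉ A)

/-- Non-evasiveness, defined inductively: a single vertex is non-evasive, and
`K` is non-evasive if some vertex has non-evasive link and deletion. -/
inductive NonEvasive : Finset (Finset α) → Prop
  | point (v : α) : NonEvasive {({v} : Finset α)}
  | step (K : Finset (Finset α)) (v : α) (hv : ({v} : Finset α) ∈ K)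
      (hlk : NonEvasive (linkCx K v)) (hdel : NonEvasive (delCx K v)) :
      NonEvasive K

/-- An elementary collapse: remove the interval above a free face `A`, i.e. a
face admitting a unique maximal face `B ⊋ A` containing it. -/
def ElemCollapse (K K' : Finset (Finset α)) : Prop :=
  ∃ A B, A ∈ K ∧ B ∈ K ∧ A ⊂ B ∧ (∀ C ∈ K, A ⊆ C → C ⊆ B) ∧
    K' = K.filter (fun C => ¬ A ⊆ C)

/-- The collapsing relation: a sequence of elementary collapses. -/
inductive CollapsesTo : Finset (Finset α) → Finset (Finset α) → Prop
  | refl (K : Finset (Finset α)) : CollapsesTo K K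
  | step {K K' L : Finset (Finset α)} : ElemCollapse K K' → CollapsesTo K' L →
      CollapsesTo K L

/-- A complex is collapsible if it collapses to a single vertex. -/
def Collapsible (K : Finset (Finset α)) : Prop :=
  ∃ v : α, CollapsesTo K {({v} : Finset α)}

/-- The Euler characteristic `Σ_{A ∈ K} (-1)^(dim A)`. -/
def eulerCharCx (K : Finset (Finset α)) : ℤ :=
  ∑ A ∈ K, (-1 : ℤ) ^ (A.card - 1)


lemma collapsesTo_trans {K L M : Finset (Finset α)} (h1 : CollapsesTo K L)
    (h2 : CollapsesTo L M) : CollapsesTo K M := by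
  induction h1 with
  | refl => exact h2
  | step e _ ih => exact CollapsesTo.step e (ih h2)

lemma collapsesTo_subset {K L : Finset (Finset α)} (h : CollapsesTo K L) : L ⊆ K := by
  induction h with
  | refl => exact subset_rfl
  | step e _ ih =>
      obtain ⟨A, B, _, _, _, _, rfl⟩ := e
      exact ih.trans (Finset.filter_subset _ _)

def coneU (D L : Finset (Finset α)) (v : α) : Finset (Finset α) :=
  D ∪ insert {v} (L.image (insert v))

lemma mem_coneU {D L : Finset (Finset α)} {v : α} {C : Finset α} :
    C ∈ coneU D L v ↔ C ∈ D ∨ C = {v} ∨ ∃ A ∈ L, C = insert v A := by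
  simp only [coneU, Finset.mem_union, Finset.mem_insert, Finset.mem_image]
  constructor
  · rintro (h | h | ⟨a, ha, rfl⟩)
    · exact Or.inl h
    · exact Or.inr (Or.inl h)
    · exact Or.inr (Or.inr ⟨a, ha, rfl⟩)
  · rintro (h | h | ⟨a, ha, rfl⟩)
    · exact Or.inl h
    · exact Or.inr (Or.inl h)
    · exact Or.inr (Or.inr ⟨a, ha, rfl⟩)

lemma elem_lift {D L L' : Finset (Finset α)} {v : α}
    (hD : ∀ A ∈ D, v ∉ A) (hL : ∀ A ∈ L, v ∉ A ∧ A.Nonempty)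
    (h : ElemCollapse L L') : ElemCollapse (coneU D L v) (coneU D L' v) := by
  obtain ⟨A, B, hA, hB, hAB, hmax, rfl⟩ := h
  obtain ⟨hvA, hAne⟩ := hL A hA
  obtain ⟨hvB, _⟩ := hL B hB
  refine ⟨insert v A, insert v B, ?_, ?_, ?_, ?_, ?_⟩
  · exact mem_coneU.2 (Or.inr (Or.inr ⟨A, hA, rfl⟩))
  · exact mem_coneU.2 (Or.inr (Or.inr ⟨B, hB, rfl⟩))
  · obtain ⟨x, hxB, hxA⟩ := Finset.exists_of_ssubset hAB
    refine Finset.ssubset_iff_of_subset (Finset.insert_subset_insert v hAB.subset) |>.2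
      ⟨x, Finset.mem_insert_of_mem hxB, ?_⟩
    simp only [Finset.mem_insert]
    rintro (rfl | hx)
    · exact hvB hxB
    · exact hxA hx
  · intro C hC hsub
    rcases mem_coneU.1 hC with hCD | rfl | ⟨A', hA', rfl⟩
    · exact absurd (hsub (Finset.mem_insert_self v A)) (hD C hCD)
    · obtain ⟨a, ha⟩ := hAne
      have := hsub (Finset.mem_insert_of_mem ha)
      simp only [Finset.mem_singleton] at this
      exact absurd (this ▸ ha) hvA
    · have hAsub : A ⊆ A' := by
        intro a ha
        have := hsub (Finset.mem_insert_of_mem ha)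
        rcases Finset.mem_insert.1 this with rfl | h
        · exact absurd ha hvA
        · exact h
      exact Finset.insert_subset_insert v (hmax A' hA' hAsub)
  · ext C
    simp only [Finset.mem_filter, mem_coneU]
    constructor
    · rintro (hCD | rfl | ⟨A', hA', rfl⟩)
      · refine ⟨Or.inl hCD, fun hsub => (hD C hCD) (hsub (Finset.mem_insert_self v A))⟩
      · refine ⟨Or.inr (Or.inl rfl), fun hsub => ?_⟩
        obtain ⟨a, ha⟩ := hAne
        have := hsub (Finset.mem_insert_of_mem ha)
        simp only [Finset.mem_singleton] at this
        exact hvA (this ▸ ha)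
      · refine ⟨Or.inr (Or.inr ⟨A', hA'.1, rfl⟩), fun hsub => hA'.2 ?_⟩
        intro a ha
        have := hsub (Finset.mem_insert_of_mem ha)
        rcases Finset.mem_insert.1 this with rfl | h
        · exact absurd ha hvA
        · exact h
    · rintro ⟨hCD | rfl | ⟨A', hA', rfl⟩, hn⟩
      · exact Or.inl hCD
      · exact Or.inr (Or.inl rfl)
      · refine Or.inr (Or.inr ⟨A', ⟨hA', fun hAA' => hn ?_⟩, rfl⟩)
        exact Finset.insert_subset_insert v hAA'

lemma collapses_lift {D : Finset (Finset α)} {v : α} (hD : ∀ A ∈ D, v ∉ A)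
    {L L' : Finset (Finset α)} (h : CollapsesTo L L')
    (hL : ∀ A ∈ L, v ∉ A ∧ A.Nonempty) :
    CollapsesTo (coneU D L v) (coneU D L' v) := by
  induction h with
  | refl => exact CollapsesTo.refl _
  | step e hc ih =>
      rename_i K K' M
      refine CollapsesTo.step (elem_lift hD hL e) (ih fun A hA => ?_)
      obtain ⟨_, _, _, _, _, _, rfl⟩ := e
      exact hL A (Finset.mem_filter.1 hA).1

lemma cone_decomp {K : Finset (Finset α)} {v : α} (hK : IsComplex K)
    (hv : ({v} : Finset α) ∈ K) : K = coneU (delCx K v) (linkCx K v) v := by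
  ext C
  rw [mem_coneU]
  constructor
  · intro hC
    by_cases hvC : v ∈ C
    · by_cases hC1 : C = {v}
      · exact Or.inr (Or.inl hC1)
      · refine Or.inr (Or.inr ⟨C.erase v, ?_, (Finset.insert_erase hvC).symm⟩)
        have hne : (C.erase v).Nonempty := by
          rcases (hK.1 C hC) with ⟨c, hc⟩
          obtain ⟨x, hx, hxv⟩ : ∃ x ∈ C, x ≠ v := by
            by_contra hcon
            push_neg at hcon
            exact hC1 (Finset.eq_singleton_iff_unique_mem.2 ⟨hvC, hcon⟩)
          exact ⟨x, Finset.mem_erase.2 ⟨hxv, hx⟩⟩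
        have hmem : C.erase v ∈ K := hK.2 C hC _ (Finset.erase_subset v C) hne
        refine Finset.mem_filter.2 ⟨hmem, Finset.notMem_erase v C, ?_⟩
        rwa [Finset.insert_erase hvC]
    · exact Or.inl (Finset.mem_filter.2 ⟨hC, hvC⟩)
  · rintro (h | rfl | ⟨A, hA, rfl⟩)
    · exact (Finset.mem_filter.1 h).1
    · exact hv
    · exact (Finset.mem_filter.1 hA).2.2

lemma final_collapse {D : Finset (Finset α)} {v w : α} (hD : ∀ A ∈ D, v ∉ A)
    (hw : w ≠ v) : ElemCollapse (coneU D {({w} : Finset α)} v) D := by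
  refine ⟨{v}, insert v {w}, mem_coneU.2 (Or.inr (Or.inl rfl)),
    mem_coneU.2 (Or.inr (Or.inr ⟨{w}, Finset.mem_singleton_self _, rfl⟩)), ?_, ?_, ?_⟩
  · refine Finset.ssubset_iff_of_subset (by intro x hx; simp_all) |>.2 ⟨w, by simp, by simp [hw]⟩
  · intro C hC hsub
    rcases mem_coneU.1 hC with hCD | rfl | ⟨A, hA, rfl⟩
    · exact absurd (hsub (Finset.mem_singleton_self v)) (hD C hCD)
    · exact Finset.singleton_subset_iff.2 (Finset.mem_insert_self v {w})
    · rw [Finset.mem_singleton] at hA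
      subst hA
      exact subset_rfl
  · ext C
    simp only [Finset.mem_filter, mem_coneU, Finset.singleton_subset_iff, Finset.mem_singleton]
    constructor
    · intro hC
      refine ⟨Or.inl hC, fun hv => hD C hC hv⟩
    · rintro ⟨hCD | rfl | ⟨A, hA, rfl⟩, hn⟩
      · exact hCD
      · exact absurd (Finset.mem_singleton_self v) hn
      · exact absurd (Finset.mem_insert_self v A) hn

lemma isComplex_link {K : Finset (Finset α)} {v : α} (hK : IsComplex K) :
    IsComplex (linkCx K v) := by
  constructor
  · intro A hA; exact hK.1 A (Finset.mem_filter.1 hA).1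
  · intro A hA B hBA hBne
    obtain ⟨hAK, hvA, hins⟩ := Finset.mem_filter.1 hA
    refine Finset.mem_filter.2 ⟨hK.2 A hAK B hBA hBne, fun hvB => hvA (hBA hvB), ?_⟩
    exact hK.2 _ hins _ (Finset.insert_subset_insert v hBA) ⟨v, Finset.mem_insert_self v B⟩

lemma isComplex_del {K : Finset (Finset α)} {v : α} (hK : IsComplex K) :
    IsComplex (delCx K v) := by
  constructor
  · intro A hA; exact hK.1 A (Finset.mem_filter.1 hA).1
  · intro A hA B hBA hBne
    obtain ⟨hAK, hvA⟩ := Finset.mem_filter.1 hA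
    exact Finset.mem_filter.2 ⟨hK.2 A hAK B hBA hBne, fun hvB => hvA (hBA hvB)⟩

lemma nonEvasive_collapsible {K : Finset (Finset α)} (h : NonEvasive K) :
    IsComplex K → Collapsible K := by
  induction h with
  | point v => exact fun _ => ⟨v, CollapsesTo.refl _⟩
  | step K v hv hlk hdel ihlk ihdel =>
      intro hK
      obtain ⟨w, hw⟩ := ihlk (isComplex_link hK)
      obtain ⟨u, hu⟩ := ihdel (isComplex_del hK)
      have hDv : ∀ A ∈ delCx K v, v ∉ A := fun A hA => (Finset.mem_filter.1 hA).2
      have hLv : ∀ A ∈ linkCx K v, v ∉ A ∧ A.Nonempty := fun A hA =>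
        ⟨(Finset.mem_filter.1 hA).2.1, hK.1 A (Finset.mem_filter.1 hA).1⟩
      have hwv : w ≠ v := by
        have : ({w} : Finset α) ∈ linkCx K v :=
          collapsesTo_subset hw (Finset.mem_singleton_self _)
        have := (Finset.mem_filter.1 this).2.1
        simp only [Finset.mem_singleton] at this
        exact fun h => this h.symm
      refine ⟨u, ?_⟩
      rw [cone_decomp hK hv]
      refine collapsesTo_trans (collapses_lift hDv hw hLv) ?_
      exact CollapsesTo.step (final_collapse hDv hwv) hu

lemma elem_euler {K K' : Finset (Finset α)} (hK : IsComplex K)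
    (h : ElemCollapse K K') : IsComplex K' ∧ eulerCharCx K' = eulerCharCx K := by
  obtain ⟨A, B, hA, hB, hAB, hmax, rfl⟩ := h
  constructor
  · constructor
    · intro C hC; exact hK.1 C (Finset.mem_filter.1 hC).1
    · intro C hC D hDC hDne
      obtain ⟨hCK, hnC⟩ := Finset.mem_filter.1 hC
      refine Finset.mem_filter.2 ⟨hK.2 C hCK D hDC hDne, fun hAD => hnC (hAD.trans hDC)⟩
  · have hAne : A.Nonempty := hK.1 A hA
    obtain ⟨x, hxB, hxA⟩ := Finset.exists_of_ssubset hAB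
    have key : ∑ C ∈ K.filter (fun C => A ⊆ C), (-1 : ℤ) ^ (C.card - 1) = 0 := by
      refine Finset.sum_involution
        (fun C _ => if x ∈ C then C.erase x else insert x C) ?_ ?_ ?_ ?_
      · intro C hC
        obtain ⟨hCK, hAC⟩ := Finset.mem_filter.1 hC
        have hC1 : 1 ≤ C.card := Finset.card_pos.2 (hAne.mono hAC)
        by_cases hx : x ∈ C
        · simp only [hx, if_true, Finset.card_erase_of_mem hx]
          have hC2 : 2 ≤ C.card := by
            obtain ⟨a, ha⟩ := hAne
            refine Finset.one_lt_card.2 ⟨x, hx, a, hAC ha, fun he => hxA (he ▸ ha)⟩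
          have h1 : C.card - 1 = (C.card - 2) + 1 := by omega
          have h2 : C.card - 1 - 1 = C.card - 2 := by omega
          rw [h2, h1, pow_succ]
          ring
        · simp only [hx, if_false, Finset.card_insert_of_notMem hx]
          have h1 : C.card + 1 - 1 = C.card - 1 + 1 := by omega
          rw [h1, pow_succ]
          ring
      · intro C hC _
        by_cases hx : x ∈ C
        · simp only [hx, if_true]
          exact fun he => (he ▸ Finset.notMem_erase x C) hx
        · simp only [hx, if_false]
          exact fun he => hx (he ▸ Finset.mem_insert_self x C)
      · intro C hC
        obtain ⟨hCK, hAC⟩ := Finset.mem_filter.1 hC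
        have hCB : C ⊆ B := hmax C hCK hAC
        by_cases hx : x ∈ C
        · simp only [hx, if_true]
          refine Finset.mem_filter.2 ⟨hK.2 C hCK _ (Finset.erase_subset x C)
            (hAne.mono (fun a ha => Finset.mem_erase.2 ⟨fun he => hxA (he ▸ ha), hAC ha⟩)), ?_⟩
          intro a ha
          exact Finset.mem_erase.2 ⟨fun he => hxA (he ▸ ha), hAC ha⟩
        · simp only [hx, if_false]
          refine Finset.mem_filter.2 ⟨hK.2 B hB _ (Finset.insert_subset hxB hCB)
            ⟨x, Finset.mem_insert_self x C⟩, hAC.trans (Finset.subset_insert x C)⟩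
      · intro C hC
        by_cases hx : x ∈ C
        · simp [hx, Finset.insert_erase hx]
        · simp [hx, Finset.erase_insert hx]
    have split := Finset.sum_filter_add_sum_filter_not K (fun C => ¬ A ⊆ C)
      (fun C => (-1 : ℤ) ^ (C.card - 1))
    simp only [not_not] at split
    unfold eulerCharCx
    rw [← split, key, add_zero]

lemma collapses_euler {K L : Finset (Finset α)} (h : CollapsesTo K L)
    (hK : IsComplex K) : eulerCharCx K = eulerCharCx L := by
  induction h with
  | refl => rfl
  | step e hc ih =>
      obtain ⟨hcx, heq⟩ := elem_euler hK e
      rw [← heq]; exact ih hcx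

/-- (Kahn–Saks–Sturtevant) A non-evasive simplicial complex is collapsible;
in particular its Euler characteristic equals `1`. -/
theorem stmt_13 (K : Finset (Finset α)) (hK : IsComplex K)
    (h : NonEvasive K) : Collapsible K ∧ eulerCharCx K = 1 := by
  obtain ⟨v, hv⟩ := nonEvasive_collapsible h hK
  refine ⟨⟨v, hv⟩, ?_⟩
  rw [collapses_euler hv hK]
  simp [eulerCharCx]
end

section
/- Let P be a nonempty monotone graph property on n vertices, viewed as a simplicial complex. If there is an integer d > 1 dividing |[G]| = n!/|Aut(G)| for every graph G in P, then d divides χ(P); consequently χ(P) ≠ 1, and if P is also nontrivial then P is evasive. -/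
open Classical

variable {α : Type*} [DecidableEq α]

/-- The simplicial complex associated to a graph property `P` on `n` vertices:
its faces are the (nonempty) edge sets of the graphs in `P`. -/
noncomputable def graphComplex (n : ℕ) (P : Finset (SimpleGraph (Fin n))) :
    Finset (Finset (Sym2 (Fin n))) :=
  (P.image fun G => Finset.univ.filter (fun e : Sym2 (Fin n) => e ∈ G.edgeSet)).filter
    (·.Nonempty)

/-!
The symmetric group acts on graphs by relabelling vertices. A graph property closed under
isomorphism is a union of orbits, the summand `(-1) ^ (|E(G)| - 1)` is constant on each orbit,
and the orbit of `G` has `n! / |Aut G|` elements by orbit–stabilizer, so `d` divides `χ(P)`.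
On the other hand, if `{v}` is a face then `χ(K) = χ(del K v) + 1 - χ(link K v)`, since the faces
through `v` other than `{v}` are the cones `insert v B` over the link; by induction along the
definition of non-evasiveness, a non-evasive complex has `χ = 1`.
-/

-- Meant for complexes with nonempty faces (`IsComplex`): at `A = ∅`, `A.card - 1` truncates to `0`.
def eulerChar (K : Finset (Finset α)) : ℤ :=
  ∑ A ∈ K, (-1) ^ (A.card - 1)

structure IsComplex_s15 (K : Finset (Finset α)) : Prop where
  nonempty_of_mem : ∀ A ∈ K, A.Nonempty
  mem_of_subset : ∀ A ∈ K, ∀ B ⊆ A, B.Nonempty → B ∈ K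

namespace IsComplex_s15

variable {K : Finset (Finset α)}

lemma delCx (hK : IsComplex_s15 K) (v : α) : IsComplex_s15 (delCx K v) where
  nonempty_of_mem A hA := hK.nonempty_of_mem A (Finset.mem_filter.mp hA).1
  mem_of_subset A hA B hBA hB := by
    rw [_root_.delCx, Finset.mem_filter] at hA ⊢
    exact ⟨hK.mem_of_subset A hA.1 B hBA hB, fun hvB => hA.2 (hBA hvB)⟩

lemma linkCx (hK : IsComplex_s15 K) (v : α) : IsComplex_s15 (linkCx K v) where
  nonempty_of_mem A hA := hK.nonempty_of_mem A (Finset.mem_filter.mp hA).1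
  mem_of_subset A hA B hBA hB := by
    rw [_root_.linkCx, Finset.mem_filter] at hA ⊢
    exact ⟨hK.mem_of_subset A hA.1 B hBA hB, fun hvB => hA.2.1 (hBA hvB),
      hK.mem_of_subset _ hA.2.2 _ (Finset.insert_subset_insert v hBA) (Finset.insert_nonempty _ _)⟩

lemma filter_mem_eq_insert_image_linkCx (hK : IsComplex_s15 K) {v : α} (hv : {v} ∈ K) :
    K.filter (v ∈ ·) = insert {v} ((_root_.linkCx K v).image (insert v)) := by
  ext A
  simp only [Finset.mem_filter, Finset.mem_insert, Finset.mem_image, _root_.linkCx]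
  constructor
  · rintro ⟨hA, hvA⟩
    by_cases hAv : A = {v}
    · exact Or.inl hAv
    have hne : (A.erase v).Nonempty := by
      rwa [Finset.erase_nonempty hvA, Finset.nontrivial_iff_ne_singleton hvA]
    refine Or.inr ⟨A.erase v, ⟨hK.mem_of_subset A hA _ (Finset.erase_subset v A) hne,
      Finset.notMem_erase v A, ?_⟩, Finset.insert_erase hvA⟩
    rwa [Finset.insert_erase hvA]
  · rintro (rfl | ⟨B, ⟨-, -, hB⟩, rfl⟩)
    · exact ⟨hv, Finset.mem_singleton_self v⟩
    · exact ⟨hB, Finset.mem_insert_self v B⟩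

lemma eulerChar_eq (hK : IsComplex_s15 K) {v : α} (hv : {v} ∈ K) :
    eulerChar K = eulerChar (_root_.delCx K v) + 1 - eulerChar (_root_.linkCx K v) := by
  have hlk := hK.linkCx v
  have hnotMem : ∀ B ∈ _root_.linkCx K v, v ∉ B := fun B hB => (Finset.mem_filter.mp hB).2.1
  have hsingleton : {v} ∉ (_root_.linkCx K v).image (insert v) := by
    simp only [Finset.mem_image, not_exists, not_and]
    intro B hB hBv
    obtain ⟨b, hb⟩ := hlk.nonempty_of_mem B hB
    have : b = v := Finset.mem_singleton.mp (hBv ▸ Finset.mem_insert_of_mem hb)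
    exact hnotMem B hB (this ▸ hb)
  have hinj : Set.InjOn (insert v) (_root_.linkCx K v : Set (Finset α)) :=
    fun B hB C hC h => by
      rw [← Finset.erase_insert (hnotMem B hB), h, Finset.erase_insert (hnotMem C hC)]
  have hlink : ∑ A ∈ K.filter (v ∈ ·), (-1 : ℤ) ^ (A.card - 1)
      = 1 - eulerChar (_root_.linkCx K v) := by
    rw [hK.filter_mem_eq_insert_image_linkCx hv, Finset.sum_insert hsingleton,
      Finset.sum_image hinj, eulerChar, sub_eq_add_neg, ← Finset.sum_neg_distrib]
    refine congrArg _ (Finset.sum_congr rfl fun B hB => ?_)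
    rw [Finset.card_insert_of_notMem (hnotMem B hB), Nat.add_sub_cancel,
      ← Nat.sub_add_cancel (hlk.nonempty_of_mem B hB).card_pos, pow_succ, Nat.add_sub_cancel]
    ring
  rw [eulerChar, ← Finset.sum_filter_not_add_sum_filter K (v ∈ ·), hlink, ← add_sub_assoc]
  rfl

end IsComplex_s15

theorem NonEvasive.eulerChar_eq_one {K : Finset (Finset α)} (h : NonEvasive K)
    (hK : IsComplex_s15 K) : eulerChar K = 1 := by
  induction h with
  | point v => simp [eulerChar]
  | step K v hv _ _ ihlk ihdel =>
    rw [hK.eulerChar_eq hv, ihlk (hK.linkCx v), ihdel (hK.delCx v)]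
    ring

open MulAction in
theorem dvd_sum_of_smul_invariant {G X : Type*} [Group G] [MulAction G X] {s : Finset X}
    (hs : ∀ x ∈ s, ∀ g : G, g • x ∈ s) {f : X → ℤ} (hf : ∀ (g : G) x, f (g • x) = f x)
    {d : ℤ} (hd : ∀ x ∈ s, d ∣ (orbit G x).ncard) : d ∣ ∑ x ∈ s, f x := by
  let π : X → orbitRel.Quotient G X := Quotient.mk _
  rw [← Finset.sum_fiberwise_of_maps_to (t := s.image π) fun x hx => Finset.mem_image_of_mem π hx]
  refine Finset.dvd_sum fun ω hω => ?_
  obtain ⟨x, hx, rfl⟩ := Finset.mem_image.mp hω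
  have hfiber : ((s.filter (π · = π x) : Finset X) : Set X) = orbit G x := by
    ext y
    simp only [Finset.coe_filter, π, Quotient.eq, orbitRel_apply]
    constructor
    · exact fun h => h.2
    · rintro ⟨g, rfl⟩
      exact ⟨hs x hx g, g, rfl⟩
  have hconst : ∀ y ∈ s.filter (π · = π x), f y = f x := by
    intro y hy
    obtain ⟨g, rfl⟩ : y ∈ orbit G x := hfiber ▸ hy
    exact hf g x
  rw [Finset.sum_congr rfl hconst, Finset.sum_const, nsmul_eq_mul, ← Set.ncard_coe_finset, hfiber]
  exact (hd x hx).mul_right _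

namespace SimpleGraph

open Equiv MulAction

variable {V : Type*}

instance instMulActionPerm : MulAction (Perm V) (SimpleGraph V) where
  smul σ G := G.map σ
  one_smul := map_id
  mul_smul σ τ G := (map_map (G := G) τ σ).symm

def Iso.permSmul (σ : Perm V) (G : SimpleGraph V) : G ≃g σ • G := Iso.map σ G

lemma perm_smul_eq_bot_iff {σ : Perm V} {G : SimpleGraph V} : σ • G = ⊥ ↔ G = ⊥ := by
  rw [← edgeSet_eq_empty, ← edgeSet_eq_empty]
  change (G.map σ.toEmbedding).edgeSet = ∅ ↔ _
  rw [edgeSet_map, Set.image_eq_empty]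

lemma card_edgeSet_perm_smul (σ : Perm V) (G : SimpleGraph V) :
    Nat.card (σ • G).edgeSet = Nat.card G.edgeSet :=
  Nat.card_congr (Iso.permSmul σ G).mapEdgeSet.symm

lemma perm_smul_eq_self_iff {σ : Perm V} {G : SimpleGraph V} :
    σ • G = G ↔ ∀ a b, G.Adj (σ a) (σ b) ↔ G.Adj a b := by
  have hadj : ∀ a b, (σ • G).Adj (σ a) (σ b) ↔ G.Adj a b :=
    fun _ _ => map_adj_apply (f := σ.toEmbedding)
  constructor
  · intro h a b
    conv_rhs => rw [← hadj]
    rw [h]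
  · intro h
    ext x y
    have h₁ := hadj (σ.symm x) (σ.symm y)
    have h₂ := h (σ.symm x) (σ.symm y)
    simp only [Equiv.apply_symm_apply] at h₁ h₂
    exact h₁.trans h₂.symm

def stabilizerEquivIso (G : SimpleGraph V) : stabilizer (Perm V) G ≃ (G ≃g G) where
  toFun σ := ⟨σ.1, perm_smul_eq_self_iff.mp σ.2 _ _⟩
  invFun φ := ⟨φ.toEquiv, perm_smul_eq_self_iff.mpr fun _ _ => φ.map_adj_iff⟩

theorem ncard_orbit_perm [Finite V] (G : SimpleGraph V) :
    (orbit (Perm V) G).ncard = (Nat.card V).factorial / Nat.card (G ≃g G) := by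
  rw [← index_stabilizer, ← Nat.card_perm, ← Nat.card_congr (stabilizerEquivIso G),
    ← Subgroup.card_mul_index (stabilizer (Perm V) G), Nat.mul_div_cancel_left _ Nat.card_pos]

end SimpleGraph

section GraphComplex

variable {n : ℕ} {P : Finset (SimpleGraph (Fin n))}

lemma graphComplex_eq_image :
    graphComplex n P = (P.filter (· ≠ ⊥)).image (·.edgeFinset) := by
  have hedges : ∀ G : SimpleGraph (Fin n),
      Finset.univ.filter (· ∈ G.edgeSet) = G.edgeFinset := fun G => by ext; simp
  ext A
  simp only [graphComplex, hedges, Finset.mem_filter, Finset.mem_image]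
  constructor
  · rintro ⟨⟨G, hG, rfl⟩, hne⟩
    exact ⟨G, ⟨hG, SimpleGraph.edgeFinset_nonempty.mp hne⟩, rfl⟩
  · rintro ⟨G, ⟨hG, hGb⟩, rfl⟩
    exact ⟨⟨G, hG, rfl⟩, SimpleGraph.edgeFinset_nonempty.mpr hGb⟩

lemma eulerChar_graphComplex :
    eulerChar (graphComplex n P)
      = ∑ G ∈ P.filter (· ≠ ⊥), (-1 : ℤ) ^ (Nat.card G.edgeSet - 1) := by
  rw [eulerChar, graphComplex_eq_image,
    Finset.sum_image fun G _ H _ h => SimpleGraph.edgeFinset_inj.mp h]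
  refine Finset.sum_congr rfl fun G _ => ?_
  rw [← SimpleGraph.coe_edgeFinset, Nat.card_coe_set_eq, Set.ncard_coe_finset]

lemma isComplex_graphComplex (hmono : ∀ G ∈ P, ∀ H : SimpleGraph (Fin n), H ≤ G → H ∈ P) :
    IsComplex_s15 (graphComplex n P) where
  nonempty_of_mem A hA := (Finset.mem_filter.mp hA).2
  mem_of_subset A hA B hBA hB := by
    rw [graphComplex_eq_image] at hA ⊢
    obtain ⟨G, hG, rfl⟩ := Finset.mem_image.mp hA
    obtain ⟨hGP, -⟩ := Finset.mem_filter.mp hG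
    have hBG : (B : Set _) ⊆ G.edgeSet := fun e he => SimpleGraph.mem_edgeFinset.mp (hBA he)
    have hedges : (G.deleteEdges (G.edgeSet \ B)).edgeFinset = B := by
      rw [← Finset.coe_inj, SimpleGraph.coe_edgeFinset, SimpleGraph.edgeSet_deleteEdges,
        Set.sdiff_sdiff_cancel_left hBG]
    refine Finset.mem_image.mpr ⟨G.deleteEdges (G.edgeSet \ B),
      Finset.mem_filter.mpr ⟨hmono G hGP _ (G.deleteEdges_le _), ?_⟩, by convert hedges⟩
    rw [← SimpleGraph.edgeFinset_nonempty, hedges]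
    exact hB

lemma dvd_eulerChar_graphComplex
    (hiso : ∀ G ∈ P, ∀ H : SimpleGraph (Fin n), Nonempty (G ≃g H) → H ∈ P) {d : ℕ}
    (hdvd : ∀ G ∈ P, G ≠ ⊥ → d ∣ n.factorial / Nat.card (G ≃g G)) :
    (d : ℤ) ∣ eulerChar (graphComplex n P) := by
  rw [eulerChar_graphComplex]
  refine dvd_sum_of_smul_invariant (G := Equiv.Perm (Fin n)) ?_
    (fun σ G => by rw [SimpleGraph.card_edgeSet_perm_smul]) ?_
  · intro G hG σ
    simp only [Finset.mem_filter, ne_eq, SimpleGraph.perm_smul_eq_bot_iff] at hG ⊢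
    exact ⟨hiso G hG.1 _ ⟨SimpleGraph.Iso.permSmul σ G⟩, hG.2⟩
  · intro G hG
    obtain ⟨hGP, hG⟩ := Finset.mem_filter.mp hG
    rw [SimpleGraph.ncard_orbit_perm, Nat.card_fin]
    exact_mod_cast hdvd G hGP hG

end GraphComplex

theorem stmt_15_general (n : ℕ) (P : Finset (SimpleGraph (Fin n)))
    (hmono : ∀ G ∈ P, ∀ H : SimpleGraph (Fin n), H ≤ G → H ∈ P)
    (hiso : ∀ G ∈ P, ∀ H : SimpleGraph (Fin n), Nonempty (G ≃g H) → H ∈ P)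
    (d : ℕ) (hd : 1 < d)
    (hdvd : ∀ G ∈ P, G ≠ ⊥ → d ∣ n.factorial / Nat.card (G ≃g G)) :
    (d : ℤ) ∣ ∑ G ∈ P.filter (· ≠ ⊥), (-1 : ℤ) ^ (Nat.card G.edgeSet - 1) ∧
    (∑ G ∈ P.filter (· ≠ ⊥), (-1 : ℤ) ^ (Nat.card G.edgeSet - 1)) ≠ 1 ∧
    ((∃ G : SimpleGraph (Fin n), G ∉ P) → ¬ NonEvasive (graphComplex n P)) := by
  rw [← eulerChar_graphComplex]
  have hχ : (d : ℤ) ∣ eulerChar (graphComplex n P) := dvd_eulerChar_graphComplex hiso hdvd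
  have hχ_ne_one : eulerChar (graphComplex n P) ≠ 1 := by
    intro h
    have := Int.le_of_dvd one_pos (h ▸ hχ)
    omega
  exact ⟨hχ, hχ_ne_one,
    fun _ hNE => hχ_ne_one (hNE.eulerChar_eq_one (isComplex_graphComplex hmono))⟩

/-- Let `P` be a nonempty monotone graph property on `n` vertices closed under
isomorphism. If some `d > 1` divides `|[G]| = n!/|Aut(G)|` for every nonempty
graph `G ∈ P`, then `d` divides `χ(P)`; consequently `χ(P) ≠ 1`, and if `P` is
moreover nontrivial then `P` is evasive. -/
theorem stmt_15 (n : ℕ) (P : Finset (SimpleGraph (Fin n)))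
    (hne : P.Nonempty)
    (hmono : ∀ G ∈ P, ∀ H : SimpleGraph (Fin n), H ≤ G → H ∈ P)
    (hiso : ∀ G ∈ P, ∀ H : SimpleGraph (Fin n), Nonempty (G ≃g H) → H ∈ P)
    (d : ℕ) (hd : 1 < d)
    (hdvd : ∀ G ∈ P, G ≠ ⊥ → d ∣ n.factorial / Nat.card (G ≃g G)) :
    (d : ℤ) ∣ ∑ G ∈ P.filter (· ≠ ⊥), (-1 : ℤ) ^ (Nat.card G.edgeSet - 1) ∧
    (∑ G ∈ P.filter (· ≠ ⊥), (-1 : ℤ) ^ (Nat.card G.edgeSet - 1)) ≠ 1 ∧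
    ((∃ G : SimpleGraph (Fin n), G ∉ P) → ¬ NonEvasive (graphComplex n P)) :=
  stmt_15_general n P hmono hiso d hd hdvd
end

section
/- Let p be a prime and let Γ ≤ S_{2p} be generated by the transpositions (1 p+1), …, (p 2p) and α = (1 2 ⋯ p)(p+1 ⋯ 2p). Every orbit of Γ acting on the 2-element subsets of {1, …, 2p} contains (as a subset of its edge set) a perfect matching of {1, …, 2p}. -/
set_option linter.unusedSectionVars false
set_option linter.unusedTactic false
set_option linter.unusedVariables false

section Helpers

variable {p : ℕ} [NeZero p]

/-- The shift permutation by `m` on both copies. -/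
def stmtShift (m : ZMod p) : Equiv.Perm (ZMod p ⊕ ZMod p) :=
  Equiv.sumCongr (Equiv.addRight m) (Equiv.addRight m)

lemma stmtShift_apply_inl (m a : ZMod p) : stmtShift m (Sum.inl a) = Sum.inl (a + m) := rfl
lemma stmtShift_apply_inr (m a : ZMod p) : stmtShift m (Sum.inr a) = Sum.inr (a + m) := rfl

lemma stmtShift_nat_mem (T : Set (Equiv.Perm (ZMod p ⊕ ZMod p)))
    (n : ℕ) :
    stmtShift (n : ZMod p) ∈
      Subgroup.closure (T ∪ {Equiv.sumCongr (Equiv.addRight (1 : ZMod p))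
        (Equiv.addRight (1 : ZMod p))}) := by
  induction n with
  | zero =>
      have : stmtShift ((0 : ℕ) : ZMod p) = 1 := by
        ext x; cases x <;> simp [stmtShift]
      rw [this]; exact one_mem _
  | succ n ih =>
      have hα : (Equiv.sumCongr (Equiv.addRight (1 : ZMod p)) (Equiv.addRight (1 : ZMod p))) ∈
          Subgroup.closure (T ∪ {Equiv.sumCongr (Equiv.addRight (1 : ZMod p))
            (Equiv.addRight (1 : ZMod p))}) :=
        Subgroup.subset_closure (Or.inr rfl)
      have key : stmtShift ((n + 1 : ℕ) : ZMod p) =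
          stmtShift (n : ZMod p) *
            Equiv.sumCongr (Equiv.addRight (1 : ZMod p)) (Equiv.addRight (1 : ZMod p)) := by
        ext x
        cases x <;> simp [stmtShift, Equiv.Perm.mul_apply] <;> push_cast <;> ring
      rw [key]
      exact mul_mem ih hα

lemma stmtShift_mem (T : Set (Equiv.Perm (ZMod p ⊕ ZMod p))) (m : ZMod p) :
    stmtShift m ∈
      Subgroup.closure (T ∪ {Equiv.sumCongr (Equiv.addRight (1 : ZMod p))
        (Equiv.addRight (1 : ZMod p))}) := by
  have := stmtShift_nat_mem T (p := p) m.val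
  rwa [ZMod.natCast_val, ZMod.cast_id] at this

end Helpers

/-- Let `p` be a prime and `Γ` the subgroup of permutations of two copies of
`Z/p` generated by the `p` transpositions `(i, i')` and the permutation `α`
shifting both copies cyclically. Every orbit of `Γ` on the 2-element subsets of
the `2p` points contains a perfect matching. -/
theorem stmt_19 (p : ℕ) [NeZero p] (hp : p.Prime) :
    letI V := ZMod p ⊕ ZMod p
    letI T : Set (Equiv.Perm V) :=
      {σ | ∃ i : ZMod p, σ = Equiv.swap (Sum.inl i) (Sum.inr i)}
    letI α : Equiv.Perm V :=
      Equiv.sumCongr (Equiv.addRight (1 : ZMod p)) (Equiv.addRight (1 : ZMod p))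
    letI Γ : Subgroup (Equiv.Perm V) := Subgroup.closure (T ∪ {α})
    ∀ e : Sym2 V, ¬ e.IsDiag →
      ∃ M : Set (Sym2 V), M ⊆ {x : Sym2 V | ∃ σ ∈ Γ, Sym2.map σ e = x} ∧
        ∀ v : V, ∃! m : Sym2 V, m ∈ M ∧ v ∈ m := by
  intro e he
  set T : Set (Equiv.Perm (ZMod p ⊕ ZMod p)) :=
    {σ | ∃ i : ZMod p, σ = Equiv.swap (Sum.inl i) (Sum.inr i)} with hT
  set Γ : Subgroup (Equiv.Perm (ZMod p ⊕ ZMod p)) :=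
    Subgroup.closure (T ∪ {Equiv.sumCongr (Equiv.addRight (1 : ZMod p))
      (Equiv.addRight (1 : ZMod p))}) with hΓ
  -- reduce to the claim: there exist i j and σ0 ∈ Γ with Sym2.map σ0 e = s(inl i, inr j)
  have main : ∀ (e : Sym2 (ZMod p ⊕ ZMod p)) (i j : ZMod p),
      (∃ σ ∈ Γ, Sym2.map σ e = s(Sum.inl i, Sum.inr j)) →
      ∃ M : Set (Sym2 (ZMod p ⊕ ZMod p)),
        M ⊆ {x : Sym2 (ZMod p ⊕ ZMod p) | ∃ σ ∈ Γ, Sym2.map σ e = x} ∧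
        ∀ v : ZMod p ⊕ ZMod p, ∃! m : Sym2 (ZMod p ⊕ ZMod p), m ∈ M ∧ v ∈ m := by
    rintro e i j ⟨σ0, hσ0, hmap⟩
    set d : ZMod p := j - i with hd
    refine ⟨Set.range (fun k : ZMod p => s(Sum.inl k, Sum.inr (k + d))), ?_, ?_⟩
    · rintro m ⟨k, rfl⟩
      refine ⟨stmtShift (k - i) * σ0, mul_mem (stmtShift_mem T (k - i)) hσ0, ?_⟩
      have : Sym2.map (stmtShift (k - i) * σ0) e
          = Sym2.map (stmtShift (k - i)) (Sym2.map σ0 e) := by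
        rw [Sym2.map_map]; rfl
      rw [this, hmap]
      simp only [Sym2.map_pair_eq, stmtShift_apply_inl, stmtShift_apply_inr]
      have h1 : i + (k - i) = k := by ring
      have h2 : j + (k - i) = k + d := by rw [hd]; ring
      rw [h1, h2]
    · intro v
      cases v with
      | inl a =>
          refine ⟨s(Sum.inl a, Sum.inr (a + d)), ⟨⟨a, rfl⟩, by simp⟩, ?_⟩
          rintro m ⟨⟨k, rfl⟩, hv⟩
          rcases Sym2.mem_iff.mp hv with h | h
          · cases h; rfl
          · exact absurd h (by simp)
      | inr a =>
          refine ⟨s(Sum.inl (a - d), Sum.inr a), ⟨⟨a - d, by simp only [sub_add_cancel]⟩, by simp⟩, ?_⟩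
          rintro m ⟨⟨k, rfl⟩, hv⟩
          rcases Sym2.mem_iff.mp hv with h | h
          · exact absurd h (by simp)
          · have h2 : k + d = a := Sum.inr.inj h.symm
            have hk : k = a - d := by rw [← h2]; ring
            subst hk
            simp only [sub_add_cancel]
  revert he
  induction e using Sym2.ind with
  | _ a b =>
  intro he
  rw [Sym2.mk_isDiag_iff] at he
  cases a with
  | inl i =>
    cases b with
    | inl j =>
      have hij : i ≠ j := fun h => he (by rw [h])
      refine main _ i j ⟨Equiv.swap (Sum.inl j) (Sum.inr j),
        Subgroup.subset_closure (Or.inl ⟨j, rfl⟩), ?_⟩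
      rw [Sym2.map_pair_eq,
        Equiv.swap_apply_of_ne_of_ne (by simp [hij]) (by simp), Equiv.swap_apply_left]
    | inr j =>
      exact main _ i j ⟨1, one_mem _, by simp⟩
  | inr i =>
    cases b with
    | inl j =>
      refine main _ j i ⟨1, one_mem _, ?_⟩
      simp [Sym2.eq_swap]
    | inr j =>
      have hij : i ≠ j := fun h => he (by rw [h])
      refine main _ i j ⟨Equiv.swap (Sum.inl i) (Sum.inr i),
        Subgroup.subset_closure (Or.inl ⟨i, rfl⟩), ?_⟩
      rw [Sym2.map_pair_eq, Equiv.swap_apply_right,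
        Equiv.swap_apply_of_ne_of_ne (by simp) (by simp [Ne.symm hij])]
end
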